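/- arXiv:1510.01596 — 2 statements merged into one kernel-verified Lean document; each statement's English description precedes it below -/
import Mathlib

section
/- Let n ≥ 1 and s ∈ (0,1). (i) For every R > 0 and every x ∈ ℝ^n with |x| < R, one has ∫_{{y ∈ ℝ^n : |y| ≥ R}} |x−y|^{−n−2s} dy ≤ (σ_{n−1}/(2s)) (R−|x|)^{−2s}, where σ_{n−1} is the surface measure of the unit sphere S^{n−1}. (ii) Consequently, there is a constant C depending only on n such that for every R ≥ 2, ∫_{B_{R−1}} ∫_{{|y| ≥ R}} |x−y|^{−n−2s} dy dx ≤ (C/s) Φ_{n,s}(R), where B_{R-1} = {x ∈ ℝ^n : |x| < R-1}. -/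
open MeasureTheory Filter Set

/-- The function `Φ_{n,s}(R)`. -/
noncomputable def Phi (n : ℕ) (s R : ℝ) : ℝ :=
  if s = 1 / 2 then R ^ ((n : ℝ) - 1) * Real.log R
  else R ^ ((n : ℝ) - 1) * (R ^ (1 - 2 * s) - 1) / (1 - 2 * s)

/-- The surface measure `σ_{n-1}` of the unit sphere `S^{n-1} ⊂ ℝ^n`, namely `n·ω_n` where
`ω_n` is the volume of the unit ball. -/
noncomputable def sphereArea (n : ℕ) : ℝ :=
  (n : ℝ) * (volume (Metric.ball (0 : EuclideanSpace ℝ (Fin n)) 1)).toReal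

/-! Translating by `x` maps `{|y| ≥ R}` into `{|z| ≥ R - |x|}`, on which polar coordinates give
`∫ |z|^{-n-2s} dz = σ_{n-1} (R - |x|)^{-2s} / (2s)`. Integrating this bound over `B_{R-1}`, again in
polar coordinates, bounds the double integral by
`σ_{n-1}² / (2s) · ∫₀^{R-1} t^{n-1} (R - t)^{-2s} dt ≤ σ_{n-1}² / (2s) · R^{n-1} ∫₁^R u^{-2s} du`,
and `R^{n-1} ∫₁^R u^{-2s} du` is exactly `Φ_{n,s}(R)`. -/

open Metric

lemma norm_preimage_indicator {E : Type*} [Norm E] (f : ℝ → ℝ) (S : Set ℝ) :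
    ((‖·‖) ⁻¹' S).indicator (fun x : E => f ‖x‖) = fun x => S.indicator f ‖x‖ :=
  funext fun _ => indicator_comp_right (‖·‖)

lemma compl_ball_zero_eq_norm_preimage {E : Type*} [SeminormedAddCommGroup E] (r : ℝ) :
    (ball (0 : E) r)ᶜ = (‖·‖) ⁻¹' Ici r := by
  ext; simp

lemma ball_zero_eq_norm_preimage {E : Type*} [SeminormedAddCommGroup E] (r : ℝ) :
    ball (0 : E) r = (‖·‖) ⁻¹' Iio r := by
  ext; simp

lemma continuousOn_rpow_sub_norm {E : Type*} [SeminormedAddCommGroup E] (q : ℝ) {R : ℝ} :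
    ContinuousOn (fun x : E => (R - ‖x‖) ^ q) (closedBall 0 (R - 1)) := by
  refine (continuousOn_const.sub continuous_norm.continuousOn).rpow_const fun x hx => ?_
  rw [mem_closedBall_zero_iff] at hx
  exact .inl (show R - ‖x‖ ≠ 0 by linarith)

theorem Phi_eq_rpow_mul_integral (n : ℕ) (s : ℝ) {R : ℝ} (hR : 0 < R) :
    Phi n s R = R ^ ((n : ℝ) - 1) * ∫ u in (1 : ℝ)..R, u ^ (-(2 * s)) := by
  have h0 : (0 : ℝ) ∉ uIcc 1 R := fun h => (lt_min one_pos hR).not_ge h.1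
  unfold Phi
  split_ifs with hs
  · rw [hs, show -(2 * (1 / 2 : ℝ)) = -1 by norm_num]
    simp only [Real.rpow_neg_one, integral_inv h0, div_one]
  · rw [integral_rpow (.inr ⟨fun h => hs (by linarith), h0⟩), Real.one_rpow, mul_div_assoc]
    ring_nf

section

variable {n : ℕ} [NeZero n]

lemma sphereArea_pos : 0 < sphereArea n :=
  mul_pos (mod_cast NeZero.pos n)
    (ENNReal.toReal_pos (measure_ball_pos volume 0 one_pos).ne' measure_ball_lt_top.ne)

theorem setIntegral_norm_preimage (f : ℝ → ℝ) {S : Set ℝ} (hS : MeasurableSet S) :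
    ∫ x in (‖·‖) ⁻¹' S, f ‖x‖ ∂(volume : Measure (EuclideanSpace ℝ (Fin n)))
      = sphereArea n * ∫ t in Ioi 0 ∩ S, t ^ (n - 1) * f t := by
  rw [← integral_indicator (measurableSet_preimage measurable_norm hS), ← setIntegral_indicator hS]
  simp only [norm_preimage_indicator, indicator_mul_right]
  rw [integral_fun_norm_addHaar, finrank_euclideanSpace_fin, nsmul_eq_mul, smul_eq_mul,
    sphereArea, mul_assoc]
  rfl

theorem integrableOn_norm_preimage_iff {f : ℝ → ℝ} {S : Set ℝ} (hS : MeasurableSet S) :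
    IntegrableOn (fun x : EuclideanSpace ℝ (Fin n) => f ‖x‖) ((‖·‖) ⁻¹' S)
      ↔ IntegrableOn (fun t => t ^ (n - 1) * f t) (Ioi 0 ∩ S) := by
  rw [← integrable_indicator_iff (measurableSet_preimage measurable_norm hS), inter_comm,
    IntegrableOn, ← Measure.restrict_restrict hS, ← IntegrableOn, ← integrable_indicator_iff hS,
    norm_preimage_indicator, integrable_fun_norm_addHaar, finrank_euclideanSpace_fin]
  simp only [smul_eq_mul, IntegrableOn]
  congr! 1
  exact funext fun t => (indicator_mul_right S (· ^ (n - 1)) f).symm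

lemma pow_pred_mul_rpow_neg (p : ℝ) {t : ℝ} (ht : 0 < t) :
    t ^ (n - 1) * t ^ (-p) = t ^ ((n : ℝ) - p - 1) := by
  rw [← Real.rpow_natCast, ← Real.rpow_add ht, Nat.cast_pred (NeZero.pos n)]
  ring_nf

theorem integrableOn_compl_ball_norm_rpow_neg {p r : ℝ} (hp : n < p) (hr : 0 < r) :
    IntegrableOn (fun y : EuclideanSpace ℝ (Fin n) => ‖y‖ ^ (-p)) (ball 0 r)ᶜ := by
  rw [compl_ball_zero_eq_norm_preimage,
    integrableOn_norm_preimage_iff (f := (· ^ (-p))) measurableSet_Ici,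
    inter_eq_right.2 (Ici_subset_Ioi.2 hr), integrableOn_Ici_iff_integrableOn_Ioi]
  refine (integrableOn_Ioi_rpow_of_lt (a := (n : ℝ) - p - 1) (by linarith) hr).congr_fun
    (fun t ht => ?_) measurableSet_Ioi
  exact (pow_pred_mul_rpow_neg p (hr.trans ht)).symm

theorem integral_compl_ball_norm_rpow_neg {p r : ℝ} (hp : n < p) (hr : 0 < r) :
    ∫ y in (ball (0 : EuclideanSpace ℝ (Fin n)) r)ᶜ, ‖y‖ ^ (-p)
      = sphereArea n * r ^ ((n : ℝ) - p) / (p - n) := by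
  rw [compl_ball_zero_eq_norm_preimage, setIntegral_norm_preimage (· ^ (-p)) measurableSet_Ici,
    inter_eq_right.2 (Ici_subset_Ioi.2 hr), integral_Ici_eq_integral_Ioi,
    setIntegral_congr_fun measurableSet_Ioi fun t ht => pow_pred_mul_rpow_neg p (hr.trans ht),
    integral_Ioi_rpow_of_lt (by linarith) hr, sub_add_cancel, neg_div, ← div_neg, neg_sub,
    mul_div_assoc]

theorem integral_compl_ball_norm_sub_rpow_neg_le {p R : ℝ} (hp : n < p)
    (x : EuclideanSpace ℝ (Fin n)) (hx : ‖x‖ < R) :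
    ∫ y in (ball 0 R)ᶜ, ‖x - y‖ ^ (-p) ≤ sphereArea n * (R - ‖x‖) ^ ((n : ℝ) - p) / (p - n) := by
  have hr : 0 < R - ‖x‖ := sub_pos.2 hx
  have hT := (volume : Measure (EuclideanSpace ℝ (Fin n))).measurePreserving_sub_left x
  have hTemb := (Homeomorph.subLeft x).measurableEmbedding
  have hsub : (ball 0 R)ᶜ ⊆ (x - ·) ⁻¹' (ball 0 (R - ‖x‖))ᶜ := by
    intro y hy
    simp only [mem_compl_iff, mem_ball_zero_iff, not_lt, mem_preimage] at hy ⊢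
    linarith [norm_sub_norm_le y x, norm_sub_rev y x]
  calc ∫ y in (ball 0 R)ᶜ, ‖x - y‖ ^ (-p)
      ≤ ∫ y in (x - ·) ⁻¹' (ball 0 (R - ‖x‖))ᶜ, ‖x - y‖ ^ (-p) :=
        setIntegral_mono_set
          ((hT.integrableOn_comp_preimage hTemb).2
            (integrableOn_compl_ball_norm_rpow_neg hp hr))
          (.of_forall fun _ => by positivity) hsub.eventuallyLE
    _ = ∫ z in (ball (0 : EuclideanSpace ℝ (Fin n)) (R - ‖x‖))ᶜ, ‖z‖ ^ (-p) :=
        hT.setIntegral_preimage_emb hTemb (‖·‖ ^ (-p)) _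
    _ = _ := integral_compl_ball_norm_rpow_neg hp hr

theorem integral_ball_rpow_sub_norm_le (s : ℝ) {R : ℝ} (hR : 1 ≤ R) :
    ∫ x in ball (0 : EuclideanSpace ℝ (Fin n)) (R - 1), (R - ‖x‖) ^ (-(2 * s))
      ≤ sphereArea n * Phi n s R := by
  have hcont : ContinuousOn (fun t : ℝ => (R - t) ^ (-(2 * s))) (Icc 0 (R - 1)) := by
    refine (continuousOn_const.sub continuousOn_id).rpow_const fun t ht => .inl ?_
    exact show R - t ≠ 0 by linarith [ht.2]
  have hcont_weighted :
      ContinuousOn (fun t : ℝ => t ^ (n - 1) * (R - t) ^ (-(2 * s))) (Icc 0 (R - 1)) :=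
    (continuousOn_pow _).mul hcont
  have hshift :
      ∫ u in (1 : ℝ)..R, u ^ (-(2 * s)) = ∫ t in (0 : ℝ)..R - 1, (R - t) ^ (-(2 * s)) := by
    rw [intervalIntegral.integral_comp_sub_left (· ^ (-(2 * s))), sub_sub_cancel, sub_zero]
  have hR1 : (0 : ℝ) ≤ R - 1 := by linarith
  rw [ball_zero_eq_norm_preimage, setIntegral_norm_preimage (fun t => (R - t) ^ (-(2 * s)))
      measurableSet_Iio, Ioi_inter_Iio, ← integral_Ioc_eq_integral_Ioo,
    ← intervalIntegral.integral_of_le hR1, Phi_eq_rpow_mul_integral n s (by linarith), hshift,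
    ← intervalIntegral.integral_const_mul (R ^ ((n : ℝ) - 1))]
  refine mul_le_mul_of_nonneg_left (intervalIntegral.integral_mono_on hR1 ?_ ?_ fun t ht => ?_)
    sphereArea_pos.le
  · exact hcont_weighted.intervalIntegrable_of_Icc hR1
  · exact (continuousOn_const.mul hcont).intervalIntegrable_of_Icc hR1
  · have hRt : 0 ≤ R - t := by linarith [ht.2]
    gcongr
    calc t ^ (n - 1) ≤ R ^ (n - 1) := pow_le_pow_left₀ ht.1 (by linarith [ht.2]) _
      _ = R ^ ((n : ℝ) - 1) := by rw [← Real.rpow_natCast, Nat.cast_pred (NeZero.pos n)]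

theorem integral_compl_ball_norm_sub_rpow_le {s R : ℝ} (hs : 0 < s)
    (x : EuclideanSpace ℝ (Fin n)) (hx : ‖x‖ < R) :
    ∫ y in (ball 0 R)ᶜ, ‖x - y‖ ^ (-((n : ℝ) + 2 * s))
      ≤ sphereArea n / (2 * s) * (R - ‖x‖) ^ (-(2 * s)) := by
  have h := integral_compl_ball_norm_sub_rpow_neg_le (p := n + 2 * s) (by linarith) x hx
  rwa [sub_add_cancel_left, add_sub_cancel_left, mul_div_right_comm] at h

theorem integral_ball_integral_compl_ball_le {s R : ℝ} (hs : 0 < s) (hR : 1 ≤ R) :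
    ∫ x in ball (0 : EuclideanSpace ℝ (Fin n)) (R - 1),
        ∫ y in (ball 0 R)ᶜ, ‖x - y‖ ^ (-((n : ℝ) + 2 * s))
      ≤ sphereArea n ^ 2 / 2 / s * Phi n s R := by
  have hbound : IntegrableOn (fun x : EuclideanSpace ℝ (Fin n) => (R - ‖x‖) ^ (-(2 * s)))
      (ball 0 (R - 1)) :=
    ((continuousOn_rpow_sub_norm _).integrableOn_compact (isCompact_closedBall _ _)).mono_set
      ball_subset_closedBall
  have hinner : ∀ᵐ x ∂volume.restrict (ball (0 : EuclideanSpace ℝ (Fin n)) (R - 1)),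
      ∫ y in (ball 0 R)ᶜ, ‖x - y‖ ^ (-((n : ℝ) + 2 * s))
        ≤ sphereArea n / (2 * s) * (R - ‖x‖) ^ (-(2 * s)) := by
    refine (ae_restrict_iff' measurableSet_ball).2 (.of_forall fun x hx => ?_)
    exact integral_compl_ball_norm_sub_rpow_le hs x (by rw [mem_ball_zero_iff] at hx; linarith)
  calc _ ≤ ∫ x in ball (0 : EuclideanSpace ℝ (Fin n)) (R - 1),
          sphereArea n / (2 * s) * (R - ‖x‖) ^ (-(2 * s)) :=
        integral_mono_of_nonneg (.of_forall fun _ => integral_nonneg fun _ => by positivity)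
          (hbound.const_mul _) hinner
    _ = sphereArea n / (2 * s) *
          ∫ x in ball (0 : EuclideanSpace ℝ (Fin n)) (R - 1), (R - ‖x‖) ^ (-(2 * s)) :=
        integral_const_mul _ _
    _ ≤ sphereArea n / (2 * s) * (sphereArea n * Phi n s R) := by
        gcongr
        · exact (div_pos sphereArea_pos (by positivity)).le
        · exact integral_ball_rpow_sub_norm_le s hR
    _ = sphereArea n ^ 2 / 2 / s * Phi n s R := by ring

end

/-- (i) for `|x| < R`,
`∫_{|y| ≥ R} |x−y|^{−n−2s} dy ≤ (σ_{n−1}/(2s)) (R−|x|)^{−2s}`; (ii) consequently,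
`∫_{B_{R−1}} ∫_{|y| ≥ R} |x−y|^{−n−2s} dy dx ≤ (C/s) Φ_{n,s}(R)` for `R ≥ 2`,
with `C` depending only on `n`. -/
theorem far_field_kernel_bounds (n : ℕ) (hn : 1 ≤ n) :
    (∀ s ∈ Set.Ioo (0 : ℝ) 1, ∀ R : ℝ, 0 < R →
      ∀ x : EuclideanSpace ℝ (Fin n), ‖x‖ < R →
        (∫ y in (Metric.ball (0 : EuclideanSpace ℝ (Fin n)) R)ᶜ,
            ‖x - y‖ ^ (-((n : ℝ) + 2 * s)))
          ≤ sphereArea n / (2 * s) * (R - ‖x‖) ^ (-(2 * s))) ∧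
    (∃ C > 0, ∀ s ∈ Set.Ioo (0 : ℝ) 1, ∀ R : ℝ, 2 ≤ R →
      (∫ x in Metric.ball (0 : EuclideanSpace ℝ (Fin n)) (R - 1),
          ∫ y in (Metric.ball (0 : EuclideanSpace ℝ (Fin n)) R)ᶜ,
            ‖x - y‖ ^ (-((n : ℝ) + 2 * s)))
        ≤ C / s * Phi n s R) := by
  have : NeZero n := ⟨by omega⟩
  exact ⟨fun s hs _ _ x hx => integral_compl_ball_norm_sub_rpow_le hs.1 x hx,
    sphereArea n ^ 2 / 2, by have := sphereArea_pos (n := n); positivity,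
    fun s hs _ hR => integral_ball_integral_compl_ball_le hs.1 (by linarith)⟩
end

section
/- For every n ≥ 2 there exists a constant C, depending only on n, such that for every s ∈ (0,1) and every R ≥ 2 one has ∫_{B_R∖B_{R−1}} ∫_{B_{R+1}∖B_R} |x−y|^{−(n+2s−1)} dx dy ≤ C R^{n−1} / (s(1−s)), where B_r = {x ∈ ℝ^n : |x| < r}. -/
/-!
Decompose the kernel dyadically: `t ^ (-α) ≤ ∑ₖ 2 ^ α (2 ^ k) ^ (-α) 𝟙[t < 2 ^ k]` for `k ∈ ℤ`.
The double integral is then at most `∑ₖ 2 ^ α (2 ^ k) ^ (-α) P(2 ^ k)`, where `P(r)` is the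
measure of the pairs `(x, y)` of the outer and inner annulus with `‖x - y‖ < r`.
If such a pair exists, `x` lies within `r` of the sphere of radius `R`, so
`P(r) ≲ R ^ (n - 1) r · r ^ n`. Comparing `B_R ∩ B(x, r)` with its image under the homothety
of ratio `(R - 1) / R` shows that a ball of radius `r` centred in the outer annulus meets the
inner one in volume `≲ r ^ (n - 1)`, so also `P(r) ≲ R ^ (n - 1) r ^ (n - 1)`. With
`α = n + 2s - 1` the two halves of the dyadic sum are geometric series of ratios
`2 ^ (-(2 - 2s))` and `2 ^ (-2s)`, which are `O(1 / (1 - s))` and `O(1 / s)`.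
-/

open MeasureTheory Set Metric Module
open scoped ENNReal

theorem pow_sub_pow_le_of_le {a b : ℝ} (hb : 0 ≤ b) (hba : b ≤ a) (d : ℕ) :
    a ^ d - b ^ d ≤ d * a ^ (d - 1) * (a - b) := by
  have h := abs_pow_sub_pow_le a b d
  rw [abs_of_nonneg (sub_nonneg.2 hba), abs_of_nonneg hb, abs_of_nonneg (hb.trans hba),
    max_eq_left hba] at h
  linarith [le_abs_self (a ^ d - b ^ d)]

theorem two_rpow_neg_le_one_sub {σ : ℝ} (h0 : 0 ≤ σ) (h2 : σ ≤ 2) :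
    (2 : ℝ) ^ (-σ) ≤ 1 - σ / 4 := by
  have hexp : 1 + σ / 2 ≤ (2 : ℝ) ^ σ := by
    rw [Real.rpow_def_of_pos two_pos]
    nlinarith [Real.add_one_le_exp (Real.log 2 * σ), Real.log_two_gt_d9]
  rw [Real.rpow_neg zero_le_two, inv_le_iff_one_le_mul₀ (by positivity)]
  nlinarith

theorem tsum_ofReal_two_rpow_neg_pow_le {σ : ℝ} (h0 : 0 < σ) (h2 : σ ≤ 2) :
    ∑' m : ℕ, ENNReal.ofReal (((2 : ℝ) ^ (-σ)) ^ m) ≤ ENNReal.ofReal (4 / σ) := by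
  have hq0 : 0 ≤ (2 : ℝ) ^ (-σ) := by positivity
  have hq : (2 : ℝ) ^ (-σ) ≤ 1 - σ / 4 := two_rpow_neg_le_one_sub h0.le h2
  have hq1 : (2 : ℝ) ^ (-σ) < 1 := by linarith
  rw [← ENNReal.ofReal_tsum_of_nonneg (fun m => pow_nonneg hq0 m)
    (summable_geometric_of_lt_one hq0 hq1), tsum_geometric_of_lt_one hq0 hq1]
  refine ENNReal.ofReal_le_ofReal ?_
  calc (1 - (2 : ℝ) ^ (-σ))⁻¹ ≤ (σ / 4)⁻¹ := inv_anti₀ (by positivity) (by linarith)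
    _ = 4 / σ := inv_div _ _

theorem tsum_ofReal_min_zpow_le {a b : ℝ} (ha : 0 < a) (ha2 : a ≤ 2) (hb : 0 < b) (hb2 : b ≤ 2) :
    ∑' k : ℤ, ENNReal.ofReal (min (((2 : ℝ) ^ k) ^ a) (((2 : ℝ) ^ k) ^ (-b)))
      ≤ ENNReal.ofReal (4 / a + 4 / b) := by
  rw [← tsum_nat_add_neg_add_one ENNReal.summable, ENNReal.tsum_add,
    ENNReal.ofReal_add (by positivity) (by positivity), add_comm (ENNReal.ofReal (4 / a))]
  gcongr
  · refine (ENNReal.tsum_le_tsum fun m => ENNReal.ofReal_le_ofReal ?_).trans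
      (tsum_ofReal_two_rpow_neg_pow_le hb hb2)
    refine (min_le_right _ _).trans_eq ?_
    rw [← Real.rpow_intCast_mul zero_le_two, ← Real.rpow_mul_natCast zero_le_two]
    push_cast
    ring_nf
  · refine (ENNReal.tsum_le_tsum fun m => ENNReal.ofReal_le_ofReal ?_).trans
      (tsum_ofReal_two_rpow_neg_pow_le ha ha2)
    refine (min_le_left _ _).trans ?_
    rw [← Real.rpow_intCast_mul zero_le_two, ← Real.rpow_mul_natCast zero_le_two]
    refine Real.rpow_le_rpow_of_exponent_le one_le_two ?_
    push_cast
    nlinarith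

theorem ofReal_rpow_neg_le_tsum_indicator {α t : ℝ} (hα : 0 ≤ α) (ht : 0 ≤ t) :
    ENNReal.ofReal (t ^ (-α)) ≤ ∑' k : ℤ,
      (Iio ((2 : ℝ) ^ k)).indicator (fun _ => ENNReal.ofReal (2 ^ α * ((2 : ℝ) ^ k) ^ (-α))) t := by
  rcases ht.eq_or_lt with rfl | ht
  · refine le_trans ?_ (ENNReal.le_tsum 0)
    rw [indicator_of_mem (by norm_num)]
    refine ENNReal.ofReal_le_ofReal ?_
    simpa using (Real.zero_rpow_le_one _).trans (Real.one_le_rpow one_le_two hα)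
  · have hle : (2 : ℝ) ^ Int.log 2 t ≤ t := by
      exact_mod_cast Int.zpow_log_le_self (b := 2) one_lt_two ht
    have hlt : t < (2 : ℝ) ^ (Int.log 2 t + 1) := by
      exact_mod_cast Int.lt_zpow_succ_log_self (b := 2) one_lt_two t
    refine le_trans ?_ (ENNReal.le_tsum (Int.log 2 t + 1))
    rw [indicator_of_mem (mem_Iio.2 hlt)]
    refine ENNReal.ofReal_le_ofReal ?_
    calc t ^ (-α) ≤ ((2 : ℝ) ^ Int.log 2 t) ^ (-α) :=
          Real.rpow_le_rpow_of_nonpos (by positivity) hle (neg_nonpos.2 hα)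
      _ = 2 ^ α * ((2 : ℝ) ^ (Int.log 2 t + 1)) ^ (-α) := by
          rw [zpow_add_one₀ two_ne_zero, Real.mul_rpow (by positivity) zero_le_two,
            Real.rpow_neg zero_le_two, mul_left_comm, mul_inv_cancel₀ (by positivity), mul_one]

theorem rpow_neg_mul_min_pow {r s : ℝ} (hr : 0 < r) {d : ℕ} (hd : 1 ≤ d) :
    r ^ (-((d : ℝ) + 2 * s - 1)) * min (r ^ (d + 1)) (r ^ (d - 1)) =
      min (r ^ (2 - 2 * s)) (r ^ (-(2 * s))) := by
  rw [mul_min_of_nonneg _ _ (by positivity), ← Real.rpow_natCast, ← Real.rpow_natCast,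
    ← Real.rpow_add hr, ← Real.rpow_add hr]
  push_cast [Nat.cast_sub hd]
  ring_nf

theorem ofReal_integral_le_lintegral_ofReal {X : Type*} [MeasurableSpace X] {μ : Measure X}
    {f : X → ℝ} (hf : 0 ≤ᵐ[μ] f) :
    ENNReal.ofReal (∫ x, f x ∂μ) ≤ ∫⁻ x, ENNReal.ofReal (f x) ∂μ := by
  by_cases hfi : Integrable f μ
  · exact (ofReal_integral_eq_lintegral_ofReal hfi hf).le
  · simp [integral_undef hfi]

theorem lintegral_lintegral_rpow_neg_le_tsum {X : Type*} [SeminormedAddCommGroup X]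
    [MeasurableSpace X] [OpensMeasurableSpace X] [SecondCountableTopology X] (μ : Measure X)
    [SFinite μ] {α : ℝ} (hα : 0 ≤ α) (A B : Set X) :
    ∫⁻ x in B, ∫⁻ y in A, ENNReal.ofReal (‖x - y‖ ^ (-α)) ∂μ ∂μ ≤
      ∑' k : ℤ, ENNReal.ofReal (2 ^ α * ((2 : ℝ) ^ k) ^ (-α)) *
        ∫⁻ x in B, μ (A ∩ ball x (2 ^ k)) ∂μ := by
  have hmeas (r : ℝ) : Measurable fun x => μ (A ∩ ball x r) := by
    have := measurable_measure_prodMk_left (ν := μ.restrict A)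
      (s := {p : X × X | dist p.2 p.1 < r}) (measurableSet_lt (by fun_prop) measurable_const)
    change Measurable fun x => μ.restrict A (ball x r) at this
    simpa only [Measure.restrict_apply measurableSet_ball, inter_comm] using this
  calc _ ≤ ∫⁻ x in B, ∫⁻ y in A, ∑' k : ℤ, (ball x (2 ^ k)).indicator
          (fun _ => ENNReal.ofReal (2 ^ α * ((2 : ℝ) ^ k) ^ (-α))) y ∂μ ∂μ := by
        gcongr with x y
        refine (ofReal_rpow_neg_le_tsum_indicator hα (norm_nonneg (x - y))).trans_eq
          (tsum_congr fun k => ?_)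
        simp only [indicator, mem_Iio, mem_ball, dist_eq_norm']
    _ = ∫⁻ x in B, ∑' k : ℤ,
          ENNReal.ofReal (2 ^ α * ((2 : ℝ) ^ k) ^ (-α)) * μ (A ∩ ball x (2 ^ k)) ∂μ := by
        refine lintegral_congr fun x => ?_
        rw [lintegral_tsum fun k => (measurable_const.indicator measurableSet_ball).aemeasurable]
        simp only [lintegral_indicator_const measurableSet_ball,
          Measure.restrict_apply measurableSet_ball, inter_comm]
    _ = _ := by
        rw [lintegral_tsum fun k => ((hmeas _).const_mul _).aemeasurable]
        simp only [lintegral_const_mul _ (hmeas _)]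

theorem lintegral_lintegral_rpow_neg_le_of_forall_le {X : Type*} [SeminormedAddCommGroup X]
    [MeasurableSpace X] [OpensMeasurableSpace X] [SecondCountableTopology X] (μ : Measure X)
    [SFinite μ] {A B : Set X} {d : ℕ} (hd : 1 ≤ d) {s : ℝ} (hs : s ∈ Ioo (0 : ℝ) 1)
    {M : ℝ≥0∞} (hP : ∀ r : ℝ, 0 < r → ∫⁻ x in B, μ (A ∩ ball x r) ∂μ ≤
      M * ENNReal.ofReal (min (r ^ (d + 1)) (r ^ (d - 1)))) :
    ∫⁻ x in B, ∫⁻ y in A, ENNReal.ofReal (‖x - y‖ ^ (-((d : ℝ) + 2 * s - 1))) ∂μ ∂μ ≤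
      M * ENNReal.ofReal (2 ^ (d + 2) / (s * (1 - s))) := by
  obtain ⟨hs0, hs1⟩ := hs
  set α := (d : ℝ) + 2 * s - 1
  have hd' : (1 : ℝ) ≤ d := by exact_mod_cast hd
  calc _ ≤ ∑' k : ℤ, ENNReal.ofReal (2 ^ α * ((2 : ℝ) ^ k) ^ (-α)) *
        ∫⁻ x in B, μ (A ∩ ball x (2 ^ k)) ∂μ :=
        lintegral_lintegral_rpow_neg_le_tsum μ (by linarith) A B
    _ ≤ ∑' k : ℤ, ENNReal.ofReal (2 ^ α * ((2 : ℝ) ^ k) ^ (-α)) *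
        (M * ENNReal.ofReal (min (((2 : ℝ) ^ k) ^ (d + 1)) (((2 : ℝ) ^ k) ^ (d - 1)))) := by
        gcongr with k
        exact hP _ (zpow_pos two_pos k)
    _ = ∑' k : ℤ, M * ENNReal.ofReal (2 ^ α) *
        ENNReal.ofReal (min (((2 : ℝ) ^ k) ^ (2 - 2 * s)) (((2 : ℝ) ^ k) ^ (-(2 * s)))) := by
        refine tsum_congr fun k => ?_
        rw [← rpow_neg_mul_min_pow (zpow_pos two_pos k) hd, ENNReal.ofReal_mul (by positivity),
          ENNReal.ofReal_mul (by positivity)]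
        ring
    _ ≤ M * ENNReal.ofReal (2 ^ α) * ENNReal.ofReal (4 / (2 - 2 * s) + 4 / (2 * s)) := by
        rw [ENNReal.tsum_mul_left]
        gcongr
        exact tsum_ofReal_min_zpow_le (by linarith) (by linarith) (by linarith) (by linarith)
    _ ≤ M * ENNReal.ofReal (2 ^ (d + 2) / (s * (1 - s))) := by
        rw [mul_assoc, ← ENNReal.ofReal_mul (by positivity)]
        gcongr
        have h2α : (2 : ℝ) ^ α ≤ 2 ^ (d + 1) := by
          rw [← Real.rpow_natCast]
          exact Real.rpow_le_rpow_of_exponent_le one_le_two (by push_cast; linarith)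
        have hsum : 4 / (2 - 2 * s) + 4 / (2 * s) = 2 / (s * (1 - s)) := by
          field_simp [(by linarith : (1 : ℝ) - s ≠ 0)]
          ring
        calc 2 ^ α * (4 / (2 - 2 * s) + 4 / (2 * s))
            ≤ 2 ^ (d + 1) * (2 / (s * (1 - s))) := by
              rw [hsum]
              gcongr
          _ = 2 ^ (d + 2) / (s * (1 - s)) := by ring

variable {E : Type*} [NormedAddCommGroup E] [NormedSpace ℝ E] [FiniteDimensional ℝ E]
  [MeasurableSpace E] [BorelSpace E] (μ : Measure E) [μ.IsAddHaarMeasure]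

/-- Shrinking by `c` maps `ball 0 R ∩ ball (c⁻¹ • x) ρ` into `ball 0 (c * R) ∩ ball x ρ`, while
`ball 0 R ∩ ball x ρ` is covered by `ball 0 R ∩ ball (c⁻¹ • x) ρ` and a crescent. -/
theorem addHaar_ball_sdiff_ball_mul_inter_ball_le {c : ℝ} (hc0 : 0 < c) (hc1 : c ≤ 1) (x : E)
    {R ρ : ℝ} (hR : 0 ≤ R) (hρ : 0 ≤ ρ) :
    μ ((ball 0 R \ ball 0 (c * R)) ∩ ball x ρ) ≤
      ENNReal.ofReal (1 - c ^ finrank ℝ E) * μ (ball 0 R ∩ ball (c⁻¹ • x) ρ) +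
        μ (ball x ρ \ ball (c⁻¹ • x) ρ) := by
  set d := finrank ℝ E
  set S := ball (0 : E) R ∩ ball (c⁻¹ • x) ρ
  have hscale : ENNReal.ofReal (c ^ d) * μ S ≤ μ (ball 0 (c * R) ∩ ball x ρ) := by
    rw [← Measure.addHaar_smul_of_nonneg μ hc0.le]
    refine measure_mono (smul_set_inter_subset.trans (inter_subset_inter ?_ ?_))
    · rw [_root_.smul_ball hc0.ne', smul_zero, Real.norm_of_nonneg hc0.le]
    · rw [_root_.smul_ball hc0.ne', smul_inv_smul₀ hc0.ne', Real.norm_of_nonneg hc0.le]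
      exact ball_subset_ball (mul_le_of_le_one_left hρ hc1)
  have hsplit : μ ((ball 0 R \ ball 0 (c * R)) ∩ ball x ρ) + μ (ball 0 (c * R) ∩ ball x ρ) =
      μ (ball 0 R ∩ ball x ρ) := by
    rw [← measure_union (disjoint_sdiff_left.mono inter_subset_left inter_subset_left)
      (measurableSet_ball.inter measurableSet_ball), ← union_inter_distrib_right,
      sdiff_union_of_subset (ball_subset_ball (mul_le_of_le_one_left hR hc1))]
  have hcover : ball 0 R ∩ ball x ρ ⊆ S ∪ (ball x ρ \ ball (c⁻¹ • x) ρ) := by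
    intro y
    simp only [S, mem_union, mem_inter_iff, mem_sdiff]
    tauto
  have hfin : ENNReal.ofReal (c ^ d) * μ S ≠ ⊤ :=
    ENNReal.mul_ne_top ENNReal.ofReal_ne_top
      (measure_ne_top_of_subset inter_subset_left measure_ball_lt_top.ne)
  refine ENNReal.le_of_add_le_add_right hfin ?_
  calc _ ≤ μ ((ball 0 R \ ball 0 (c * R)) ∩ ball x ρ) + μ (ball 0 (c * R) ∩ ball x ρ) := by
        gcongr
    _ = μ (ball 0 R ∩ ball x ρ) := hsplit
    _ ≤ μ S + μ (ball x ρ \ ball (c⁻¹ • x) ρ) :=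
        (measure_mono hcover).trans (measure_union_le _ _)
    _ = _ := by
        rw [add_right_comm, ← add_mul, ← ENNReal.ofReal_add
          (sub_nonneg.2 (pow_le_one₀ hc0.le hc1)) (by positivity), sub_add_cancel,
          ENNReal.ofReal_one, one_mul]

variable [Nontrivial E]

theorem addHaar_ball_sdiff_ball_le (x : E) {r₁ r₂ : ℝ} (h₁ : 0 ≤ r₁) (h₁₂ : r₁ ≤ r₂) :
    μ (ball x r₂ \ ball x r₁) ≤
      ENNReal.ofReal (finrank ℝ E * r₂ ^ (finrank ℝ E - 1) * (r₂ - r₁)) * μ (ball 0 1) := by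
  rw [measure_sdiff (ball_subset_ball h₁₂) measurableSet_ball.nullMeasurableSet
      measure_ball_lt_top.ne, Measure.addHaar_ball μ x (h₁.trans h₁₂), Measure.addHaar_ball μ x h₁,
    ← ENNReal.sub_mul fun _ _ => measure_ball_lt_top.ne, ← ENNReal.ofReal_sub _ (by positivity)]
  gcongr
  exact pow_sub_pow_le_of_le h₁ h₁₂ _

theorem addHaar_ball_inter_ball_le (x y : E) {r ρ : ℝ} (hr : 0 ≤ r) (hρ : 0 ≤ ρ) :
    μ (ball x r ∩ ball y ρ) ≤ ENNReal.ofReal (r * ρ ^ (finrank ℝ E - 1)) * μ (ball 0 1) := by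
  have hd : finrank ℝ E ≠ 0 := finrank_pos.ne'
  rcases le_total r ρ with h | h
  · refine (measure_mono inter_subset_left).trans ?_
    rw [Measure.addHaar_ball μ x hr, ← pow_sub_one_mul hd]
    gcongr ENNReal.ofReal ?_ * _
    rw [mul_comm]
    gcongr
  · refine (measure_mono inter_subset_right).trans ?_
    rw [Measure.addHaar_ball μ y hρ, ← pow_sub_one_mul hd]
    gcongr ENNReal.ofReal ?_ * _
    rw [mul_comm]
    gcongr

theorem addHaar_ball_sdiff_ball_le_dist (x x' : E) {ρ : ℝ} (hρ : 0 ≤ ρ) :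
    μ (ball x ρ \ ball x' ρ) ≤
      ENNReal.ofReal (finrank ℝ E * ρ ^ (finrank ℝ E - 1) * dist x x') * μ (ball 0 1) := by
  have hsub : ball x ρ \ ball x' ρ ⊆ ball x ρ \ ball x (max (ρ - dist x x') 0) := by
    refine fun y ⟨hyx, hy⟩ => ⟨hyx, fun hy' => hy ?_⟩
    rw [mem_ball, lt_max_iff] at hy'
    rw [mem_ball]
    rcases hy' with hy' | hy' <;> linarith [dist_triangle y x x', dist_nonneg (x := y) (y := x)]
  refine (measure_mono hsub).trans ((addHaar_ball_sdiff_ball_le μ x (le_max_right _ _)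
    (max_le (by linarith [dist_nonneg (x := x) (y := x')]) hρ)).trans ?_)
  gcongr
  linarith [le_max_left (ρ - dist x x') 0]

theorem addHaar_ball_sdiff_ball_inter_ball_le (x : E) {R h ρ : ℝ} (hh : 0 < h) (hhR : h < R)
    (hρ : 0 < ρ) :
    μ ((ball 0 R \ ball 0 (R - h)) ∩ ball x ρ) ≤
      ENNReal.ofReal (finrank ℝ E * h * ρ ^ (finrank ℝ E - 1) * (1 + ‖x‖ / (R - h))) *
        μ (ball 0 1) := by
  set d := finrank ℝ E
  have hR : 0 < R := hh.trans hhR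
  have hRh : R - h ≠ 0 := by linarith
  set c := (R - h) / R with hc
  have hc0 : 0 < c := div_pos (by linarith) hR
  have hc1 : c ≤ 1 := div_le_one_of_le₀ (by linarith) hR.le
  have hcd : 0 ≤ 1 - c ^ d := sub_nonneg.2 (pow_le_one₀ hc0.le hc1)
  have hcR : c * R = R - h := div_mul_cancel₀ _ hR.ne'
  have hδ : dist x (c⁻¹ • x) = h / (R - h) * ‖x‖ := by
    have : x - c⁻¹ • x = -(h / (R - h)) • x := by
      rw [sub_eq_iff_eq_add, ← add_smul, hc, inv_div,
        show -(h / (R - h)) + R / (R - h) = 1 by field_simp; ring, one_smul]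
    rw [dist_eq_norm, this, norm_smul, norm_neg,
      Real.norm_of_nonneg (div_nonneg hh.le (by linarith))]
  have hbern : (1 - c ^ d) * R ≤ d * h := by
    have := pow_sub_pow_le_of_le hc0.le hc1 d
    rw [one_pow, one_pow, mul_one] at this
    calc (1 - c ^ d) * R ≤ d * (1 - c) * R := by gcongr
      _ = d * h := by rw [hc]; field_simp; ring
  calc μ ((ball 0 R \ ball 0 (R - h)) ∩ ball x ρ)
      ≤ ENNReal.ofReal (1 - c ^ d) * μ (ball 0 R ∩ ball (c⁻¹ • x) ρ) +
          μ (ball x ρ \ ball (c⁻¹ • x) ρ) := by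
        simpa only [hcR] using
          addHaar_ball_sdiff_ball_mul_inter_ball_le μ hc0 hc1 x hR.le hρ.le
    _ ≤ ENNReal.ofReal (1 - c ^ d) * (ENNReal.ofReal (R * ρ ^ (d - 1)) * μ (ball 0 1)) +
          ENNReal.ofReal (d * ρ ^ (d - 1) * (h / (R - h) * ‖x‖)) * μ (ball 0 1) := by
        rw [← hδ]
        gcongr
        · exact addHaar_ball_inter_ball_le μ 0 _ hR.le hρ.le
        · exact addHaar_ball_sdiff_ball_le_dist μ x _ hρ.le
    _ = ENNReal.ofReal ((1 - c ^ d) * R * ρ ^ (d - 1) +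
          d * ρ ^ (d - 1) * (h / (R - h) * ‖x‖)) * μ (ball 0 1) := by
        rw [← mul_assoc, ← ENNReal.ofReal_mul hcd, ← add_mul, ← ENNReal.ofReal_add
          (by positivity) (by rw [← hδ]; positivity)]
        ring_nf
    _ ≤ ENNReal.ofReal (d * h * ρ ^ (d - 1) + d * ρ ^ (d - 1) * (h / (R - h) * ‖x‖)) *
          μ (ball 0 1) := by
        gcongr
    _ = _ := by
        congr 2
        field_simp

theorem setLIntegral_measure_inter_ball_le (A B : Set E) {r : ℝ} (hr : 0 ≤ r) :
    ∫⁻ x in B, μ (A ∩ ball x r) ∂μ ≤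
      μ (B ∩ thickening r A) * (ENNReal.ofReal (r ^ finrank ℝ E) * μ (ball 0 1)) := by
  calc ∫⁻ x in B, μ (A ∩ ball x r) ∂μ
      ≤ ∫⁻ x in B, (thickening r A).indicator
          (fun _ => ENNReal.ofReal (r ^ finrank ℝ E) * μ (ball 0 1)) x ∂μ := by
        refine lintegral_mono fun x => ?_
        by_cases hx : x ∈ thickening r A
        · rw [indicator_of_mem hx, ← Measure.addHaar_ball μ x hr]
          exact measure_mono inter_subset_right
        · have : A ∩ ball x r = ∅ := eq_empty_of_forall_notMem fun y ⟨hyA, hyx⟩ =>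
            hx (mem_thickening_iff.2 ⟨y, hyA, by rwa [dist_comm]⟩)
          simp [this]
    _ = _ := by
        rw [lintegral_indicator_const isOpen_thickening.measurableSet,
          Measure.restrict_apply isOpen_thickening.measurableSet, inter_comm, mul_comm]

theorem setLIntegral_annulus_measure_inter_ball_le_pow_succ {R r : ℝ} (hR : 0 < R) (hr : 0 < r) :
    ∫⁻ x in ball (0 : E) (R + 1) \ ball 0 R, μ ((ball 0 R \ ball 0 (R - 1)) ∩ ball x r) ∂μ ≤
      ENNReal.ofReal (finrank ℝ E * (R + r) ^ (finrank ℝ E - 1) * r ^ (finrank ℝ E + 1)) *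
        μ (ball 0 1) ^ 2 := by
  have hsub : (ball (0 : E) (R + 1) \ ball 0 R) ∩ thickening r (ball 0 R \ ball 0 (R - 1)) ⊆
      ball 0 (R + r) \ ball 0 R := by
    rintro x ⟨⟨-, hxR⟩, hx⟩
    have := thickening_subset_of_subset r sdiff_subset hx
    rw [thickening_ball hr hR, add_comm] at this
    exact ⟨this, hxR⟩
  calc _ ≤ ENNReal.ofReal (finrank ℝ E * (R + r) ^ (finrank ℝ E - 1) * r) * μ (ball 0 1) *
        (ENNReal.ofReal (r ^ finrank ℝ E) * μ (ball 0 1)) := by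
        refine (setLIntegral_measure_inter_ball_le μ _ _ hr.le).trans ?_
        gcongr
        refine (measure_mono hsub).trans ?_
        simpa using addHaar_ball_sdiff_ball_le μ 0 hR.le (by linarith : R ≤ R + r)
    _ = _ := by
        rw [mul_mul_mul_comm, ← ENNReal.ofReal_mul (by positivity), ← sq]
        congr 2
        ring

theorem setLIntegral_annulus_measure_inter_ball_le_pow_pred {R r : ℝ} (hR : 2 ≤ R) (hr : 0 < r) :
    ∫⁻ x in ball (0 : E) (R + 1) \ ball 0 R, μ ((ball 0 R \ ball 0 (R - 1)) ∩ ball x r) ∂μ ≤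
      ENNReal.ofReal (4 * finrank ℝ E ^ 2 * (R + 1) ^ (finrank ℝ E - 1) *
        r ^ (finrank ℝ E - 1)) * μ (ball 0 1) ^ 2 := by
  set d := finrank ℝ E
  have hpt : ∀ x ∈ ball (0 : E) (R + 1) \ ball 0 R,
      μ ((ball 0 R \ ball 0 (R - 1)) ∩ ball x r) ≤
        ENNReal.ofReal (4 * d * r ^ (d - 1)) * μ (ball 0 1) := by
    rintro x ⟨hx, -⟩
    refine (addHaar_ball_sdiff_ball_inter_ball_le μ x one_pos (by linarith) hr).trans ?_
    gcongr ENNReal.ofReal ?_ * _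
    rw [mem_ball_zero_iff] at hx
    have : ‖x‖ / (R - 1) ≤ 3 := by rw [div_le_iff₀ (by linarith)]; linarith
    have : (0 : ℝ) ≤ d * r ^ (d - 1) := by positivity
    nlinarith
  calc _ ≤ ∫⁻ _ in ball (0 : E) (R + 1) \ ball 0 R,
        ENNReal.ofReal (4 * d * r ^ (d - 1)) * μ (ball 0 1) ∂μ :=
        setLIntegral_mono' (measurableSet_ball.diff measurableSet_ball) hpt
    _ ≤ ENNReal.ofReal (4 * d * r ^ (d - 1)) * μ (ball 0 1) *
          (ENNReal.ofReal (d * (R + 1) ^ (d - 1)) * μ (ball 0 1)) := by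
        rw [setLIntegral_const]
        gcongr
        simpa using addHaar_ball_sdiff_ball_le μ 0 (by linarith) (by linarith : R ≤ R + 1)
    _ = _ := by
        rw [mul_mul_mul_comm, ← ENNReal.ofReal_mul (by positivity), ← sq]
        congr 2
        ring

theorem setLIntegral_annulus_measure_inter_ball_le {R r : ℝ} (hR : 2 ≤ R) (hr : 0 < r) :
    ∫⁻ x in ball (0 : E) (R + 1) \ ball 0 R, μ ((ball 0 R \ ball 0 (R - 1)) ∩ ball x r) ∂μ ≤
      ENNReal.ofReal (4 * finrank ℝ E ^ 2 * (2 * R) ^ (finrank ℝ E - 1) *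
        min (r ^ (finrank ℝ E + 1)) (r ^ (finrank ℝ E - 1))) * μ (ball 0 1) ^ 2 := by
  set d := finrank ℝ E
  have hd : (1 : ℝ) ≤ d := by exact_mod_cast finrank_pos
  rcases le_total r 1 with hr1 | hr1
  · rw [min_eq_left (pow_le_pow_of_le_one hr.le hr1 (by omega))]
    refine (setLIntegral_annulus_measure_inter_ball_le_pow_succ μ (by linarith) hr).trans ?_
    gcongr ENNReal.ofReal ?_ * _
    have : (d : ℝ) ≤ 4 * d ^ 2 := by nlinarith
    gcongr
    linarith
  · rw [min_eq_right (pow_le_pow_right₀ hr1 (by omega))]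
    refine (setLIntegral_annulus_measure_inter_ball_le_pow_pred μ hR hr).trans ?_
    gcongr
    linarith

theorem lintegral_annulus_annulus_rpow_neg_le {s R : ℝ} (hs : s ∈ Ioo (0 : ℝ) 1) (hR : 2 ≤ R) :
    ∫⁻ x in ball (0 : E) (R + 1) \ ball 0 R, ∫⁻ y in ball (0 : E) R \ ball 0 (R - 1),
        ENNReal.ofReal (‖x - y‖ ^ (-((finrank ℝ E : ℝ) + 2 * s - 1))) ∂μ ∂μ ≤
      ENNReal.ofReal (8 * finrank ℝ E ^ 2 * 4 ^ finrank ℝ E * R ^ ((finrank ℝ E : ℝ) - 1) /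
        (s * (1 - s))) * μ (ball 0 1) ^ 2 := by
  set d := finrank ℝ E
  have hd : 1 ≤ d := finrank_pos
  refine (lintegral_lintegral_rpow_neg_le_of_forall_le μ hd hs
    (M := ENNReal.ofReal (4 * d ^ 2 * (2 * R) ^ (d - 1)) * μ (ball 0 1) ^ 2)
    fun r hr => ?_).trans_eq ?_
  · refine (setLIntegral_annulus_measure_inter_ball_le μ hR hr).trans_eq ?_
    rw [ENNReal.ofReal_mul (by positivity)]
    ring
  · rw [mul_right_comm, ← ENNReal.ofReal_mul (by positivity)]
    have hRpow : R ^ ((d : ℝ) - 1) = R ^ (d - 1) := by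
      rw [← Real.rpow_natCast]
      push_cast [Nat.cast_sub hd]
      rfl
    have h4 : (4 : ℝ) ^ d = 2 ^ (d - 1) * 2 ^ (d + 1) := by
      rw [← pow_add, show d - 1 + (d + 1) = 2 * d by omega, pow_mul]
      norm_num
    rw [hRpow, h4, mul_pow]
    ring_nf

/-- the annulus–annulus kernel estimate
`∫_{B_{R+1}∖B_R} ∫_{B_R∖B_{R−1}} |x−y|^{−(n+2s−1)} dy dx ≤ C R^{n−1}/(s(1−s))`
for `R ≥ 2`, with `C` depending only on `n ≥ 2` (uniform in `s ∈ (0,1)`). -/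
theorem annulus_annulus_kernel_estimate (n : ℕ) (hn : 2 ≤ n) :
    ∃ C > 0, ∀ s ∈ Set.Ioo (0 : ℝ) 1, ∀ R : ℝ, 2 ≤ R →
      (∫ x in Metric.ball (0 : EuclideanSpace ℝ (Fin n)) (R + 1) \ Metric.ball 0 R,
          ∫ y in Metric.ball (0 : EuclideanSpace ℝ (Fin n)) R \ Metric.ball 0 (R - 1),
            ‖x - y‖ ^ (-((n : ℝ) + 2 * s - 1)))
        ≤ C * R ^ ((n : ℝ) - 1) / (s * (1 - s)) := by
  have : Nontrivial (EuclideanSpace ℝ (Fin n)) :=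
    Module.nontrivial_of_finrank_pos (R := ℝ) (by rw [finrank_euclideanSpace_fin]; omega)
  set ω := volume.real (ball (0 : EuclideanSpace ℝ (Fin n)) 1)
  have hω : 0 < ω :=
    ENNReal.toReal_pos (measure_ball_pos volume 0 one_pos).ne' measure_ball_lt_top.ne
  refine ⟨8 * n ^ 2 * 4 ^ n * ω ^ 2, by positivity, fun s hs R hR => ?_⟩
  have key := lintegral_annulus_annulus_rpow_neg_le (E := EuclideanSpace ℝ (Fin n)) volume hs hR
  rw [finrank_euclideanSpace_fin, ← ofReal_measureReal measure_ball_lt_top.ne] at key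
  have hs' : 0 ≤ s * (1 - s) := mul_nonneg hs.1.le (sub_nonneg.2 hs.2.le)
  rw [← ENNReal.ofReal_le_ofReal_iff (div_nonneg (by positivity) hs')]
  calc _ ≤ _ := ofReal_integral_le_lintegral_ofReal
        (ae_of_all _ fun x => integral_nonneg fun y => Real.rpow_nonneg (norm_nonneg _) _)
    _ ≤ _ := lintegral_mono fun x => ofReal_integral_le_lintegral_ofReal
        (ae_of_all _ fun y => Real.rpow_nonneg (norm_nonneg _) _)
    _ ≤ _ := key
    _ = _ := by
      rw [← ENNReal.ofReal_pow hω.le, ← ENNReal.ofReal_mul (div_nonneg (by positivity) hs')]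
      ring_nf
end
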